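/- Let B be a graded bialgebra, and let f : B ⊗ B → B, g : B → B ⊗ B be homogeneous linear maps of degree −1 with f(1⊗b) = f(b⊗1) = 0, ε∘f = 0, g(1) = 0, (ε⊗Id)∘g = 0 = (Id⊗ε)∘g, satisfying the three 2-cocycle conditions: (i) a·f(b⊗c) − f(ab⊗c) + f(a⊗bc) − f(a⊗b)·c = 0; (ii) f(a_(1)⊗b_(1)) ⊗ a_(2)b_(2) − Δ(f(a⊗b)) + a_(1)b_(1) ⊗ f(a_(2)⊗b_(2)) + a_(1)g(b)_l ⊗ a_(2)g(b)_r − g(ab) + g(a)_l b_(1) ⊗ g(a)_r b_(2) = 0; (iii) c_(1) ⊗ g(c_(2)) − (Δ⊗Id)(g(c)) + (Id⊗Δ)(g(c)) − g(c_(1)) ⊗ c_(2) = 0. Then B[t]/(t²) equipped with m_t(a⊗b) = ab + f(a⊗b)t, Δ_t(c) = Δ(c) + g(c)t, unit 1_B, and counit ε_t(bt^j) = ε(b)t^j is a bialgebra over K[t]/(t²). -/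
import Mathlib


open TensorProduct

namespace GBD

variable (K B : Type*) [Field K] [Ring B] [Bialgebra K B]

/-- A grading `B = ⊕_{i ≥ 0} B_(i)` making `B` a graded bialgebra. -/
structure GradedBialgebra where
  grade : ℕ → Submodule K B
  internal : DirectSum.IsInternal grade
  one_mem : (1 : B) ∈ grade 0
  mul_mem : ∀ i j : ℕ, ∀ x ∈ grade i, ∀ y ∈ grade j, x * y ∈ grade (i + j)
  comul_mem : ∀ n : ℕ, ∀ x ∈ grade n,
    Coalgebra.comul (R := K) x ∈
      ⨆ p : {p : ℕ × ℕ // p.1 + p.2 = n},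
        LinearMap.range (TensorProduct.mapIncl (grade p.1.1) (grade p.1.2))
  counit_zero : ∀ n : ℕ, n ≠ 0 → ∀ x ∈ grade n, Coalgebra.counit (R := K) x = 0

/-- The degree-`n` component of the induced grading on `B ⊗ B`. -/
noncomputable def grade2 (G : GradedBialgebra K B) (n : ℕ) : Submodule K (B ⊗[K] B) :=
  ⨆ p : {p : ℕ × ℕ // p.1 + p.2 = n},
    LinearMap.range (TensorProduct.mapIncl (G.grade p.1.1) (G.grade p.1.2))

/-- The multiplication of `B` as a linear map. -/
noncomputable def mulM : B ⊗[K] B →ₗ[K] B := LinearMap.mul' K B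

/-- The flip of the middle two tensor factors, `τ₂₃`. -/
noncomputable def ttc : (B ⊗[K] B) ⊗[K] (B ⊗[K] B) →ₗ[K] (B ⊗[K] B) ⊗[K] (B ⊗[K] B) :=
  (TensorProduct.tensorTensorTensorComm K B B B B).toLinearMap

/-- The comultiplication of `B ⊗ B`, `τ₂₃ ∘ (Δ ⊗ Δ)`. -/
noncomputable def comul2 : B ⊗[K] B →ₗ[K] (B ⊗[K] B) ⊗[K] (B ⊗[K] B) :=
  ttc K B ∘ₗ TensorProduct.map (Coalgebra.comul (R := K) (A := B))
    (Coalgebra.comul (R := K) (A := B))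

/-- The associator `(B ⊗ B) ⊗ B → B ⊗ (B ⊗ B)`. -/
noncomputable def assocM : (B ⊗[K] B) ⊗[K] B →ₗ[K] B ⊗[K] (B ⊗[K] B) :=
  (TensorProduct.assoc K B B B).toLinearMap

/-- Collapsing the counit applied to the first factor, `(ε ⊗ Id) : B ⊗ B → B`. -/
noncomputable def counitL : B ⊗[K] B →ₗ[K] B :=
  (TensorProduct.lid K B).toLinearMap ∘ₗ
    LinearMap.rTensor B (Coalgebra.counit (R := K) (A := B))

/-- Collapsing the counit applied to the second factor, `(Id ⊗ ε) : B ⊗ B → B`. -/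
noncomputable def counitR : B ⊗[K] B →ₗ[K] B :=
  (TensorProduct.rid K B).toLinearMap ∘ₗ
    LinearMap.lTensor B (Coalgebra.counit (R := K) (A := B))

/-- The deformed multiplication `m_t¹` on `B[t]/(t²)`, realized on pairs
`(x₀, x₁) ↔ x₀ + x₁t`: `m_t¹(x, y) = (x₀y₀, x₀y₁ + x₁y₀ + f(x₀ ⊗ y₀))`. -/
noncomputable def defMul (f : B ⊗[K] B →ₗ[K] B) (x y : B × B) : B × B :=
  (x.1 * y.1, x.1 * y.2 + x.2 * y.1 + f (x.1 ⊗ₜ[K] y.1))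

/-- The deformed comultiplication `Δ_t¹` on `B[t]/(t²)`, realized on pairs:
`Δ_t¹(x) = (Δ(x₀), Δ(x₁) + g(x₀))`. -/
noncomputable def defComul (g : B →ₗ[K] B ⊗[K] B) (x : B × B) :
    (B ⊗[K] B) × (B ⊗[K] B) :=
  (Coalgebra.comul x.1, Coalgebra.comul x.2 + g x.1)

/-- `(Δ_t¹ ⊗ Id)` on `(B ⊗ B)[t]/(t²)` (in coordinates, transported to `B ⊗ (B ⊗ B)`). -/
noncomputable def defComulLeft (g : B →ₗ[K] B ⊗[K] B) (y : (B ⊗[K] B) × (B ⊗[K] B)) :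
    (B ⊗[K] (B ⊗[K] B)) × (B ⊗[K] (B ⊗[K] B)) :=
  (assocM K B (LinearMap.rTensor B (Coalgebra.comul (R := K) (A := B)) y.1),
   assocM K B (LinearMap.rTensor B (Coalgebra.comul (R := K) (A := B)) y.2) +
     assocM K B (LinearMap.rTensor B g y.1))

/-- `(Id ⊗ Δ_t¹)` on `(B ⊗ B)[t]/(t²)`. -/
noncomputable def defComulRight (g : B →ₗ[K] B ⊗[K] B) (y : (B ⊗[K] B) × (B ⊗[K] B)) :
    (B ⊗[K] (B ⊗[K] B)) × (B ⊗[K] (B ⊗[K] B)) :=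
  (LinearMap.lTensor B (Coalgebra.comul (R := K) (A := B)) y.1,
   LinearMap.lTensor B (Coalgebra.comul (R := K) (A := B)) y.2 +
     LinearMap.lTensor B g y.1)

/-- The deformed multiplication of `(B ⊗ B)[t]/(t²) = B[t]/(t²) ⊗_{K[t]/(t²)} B[t]/(t²)`
induced by `m_t¹` on both legs. -/
noncomputable def defMul2 (f : B ⊗[K] B →ₗ[K] B) (u v : (B ⊗[K] B) × (B ⊗[K] B)) :
    (B ⊗[K] B) × (B ⊗[K] B) :=
  (LinearMap.mul' K (B ⊗[K] B) (u.1 ⊗ₜ[K] v.1),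
   LinearMap.mul' K (B ⊗[K] B) (u.1 ⊗ₜ[K] v.2) +
     LinearMap.mul' K (B ⊗[K] B) (u.2 ⊗ₜ[K] v.1) +
       ((TensorProduct.map (mulM K B) f + TensorProduct.map f (mulM K B)) ∘ₗ ttc K B)
         (u.1 ⊗ₜ[K] v.1))

/-- A first-level (`1`-th level) graded bialgebra deformation of the graded bialgebra `B`:
a `K[t]/(t²)`-bialgebra structure on `B[t]/(t²)` (realized on pairs), with multiplication
`m_t¹ = m + ft`, comultiplication `Δ_t¹ = Δ + gt`, identity `1_B`, counit
`ε_t(bt^j) = ε(b)t^j`, and all structure maps homogeneous of degree zero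
(`f`, `g` homogeneous of degree `−1`). -/
structure OneDeformation (G : GradedBialgebra K B) where
  f : B ⊗[K] B →ₗ[K] B
  g : B →ₗ[K] B ⊗[K] B
  f_deg : ∀ (n : ℕ) (x : B ⊗[K] B), x ∈ grade2 K B G (n + 1) → f x ∈ G.grade n
  f_deg0 : ∀ x ∈ grade2 K B G 0, f x = 0
  g_deg : ∀ (n : ℕ) (x : B), x ∈ G.grade (n + 1) → g x ∈ grade2 K B G n
  g_deg0 : ∀ x ∈ G.grade 0, g x = 0
  assoc : ∀ x y z : B × B, defMul K B f (defMul K B f x y) z = defMul K B f x (defMul K B f y z)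
  one_mul' : ∀ x : B × B, defMul K B f ((1 : B), (0 : B)) x = x
  mul_one' : ∀ x : B × B, defMul K B f x ((1 : B), (0 : B)) = x
  counit_mul : ∀ x y : B × B,
    Coalgebra.counit (R := K) ((defMul K B f x y).2) =
      Coalgebra.counit (R := K) x.1 * Coalgebra.counit (R := K) y.2 +
        Coalgebra.counit (R := K) x.2 * Coalgebra.counit (R := K) y.1
  coassoc : ∀ x : B × B,
    defComulLeft K B g (defComul K B g x) = defComulRight K B g (defComul K B g x)
  counit_comul_left : ∀ x : B × B,
    (counitL K B (defComul K B g x).1, counitL K B (defComul K B g x).2) = x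
  counit_comul_right : ∀ x : B × B,
    (counitR K B (defComul K B g x).1, counitR K B (defComul K B g x).2) = x
  compat : ∀ x y : B × B,
    defComul K B g (defMul K B f x y) = defMul2 K B f (defComul K B g x) (defComul K B g y)
  comul_one : defComul K B g ((1 : B), (0 : B)) = (Coalgebra.comul (1 : B), 0)


lemma mul_ttc (u v : B ⊗[K] B) :
    TensorProduct.map (LinearMap.mul' K B) (LinearMap.mul' K B) (ttc K B (u ⊗ₜ[K] v))
      = u * v := by
  induction u with
  | zero => simp
  | tmul a b =>
    induction v with
    | zero => simp
    | tmul c d =>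
        simp [ttc, Algebra.TensorProduct.tmul_mul_tmul]
    | add v₁ v₂ h1 h2 => simp only [tmul_add, map_add, h1, h2, mul_add]
  | add u₁ u₂ h1 h2 => simp only [add_tmul, map_add, h1, h2, add_mul]

lemma counitL_comul (a : B) : counitL K B (Coalgebra.comul (R := K) a) = a := by
  simp [counitL, Coalgebra.rTensor_counit_comul]

lemma counitR_comul (a : B) : counitR K B (Coalgebra.comul (R := K) a) = a := by
  simp [counitR, Coalgebra.lTensor_counit_comul]

/-- (Converse direction of Theorem 3.3(1).) If `f : B ⊗ B → B` and
`g : B → B ⊗ B` are homogeneous of degree `−1`, vanish appropriately on units and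
counits, and satisfy the three 2-cocycle conditions (Hochschild, compatibility,
coassociativity), then `B[t]/(t²)` with `m_t = m + ft`, `Δ_t = Δ + gt`, unit `1_B` and
counit `ε_t` is a bialgebra over `K[t]/(t²)`, i.e. `(f, g)` are the terms of a
first-level graded bialgebra deformation of `B`. -/
theorem two_cocycle_gives_oneDeformation (G : GradedBialgebra K B)
    (f : B ⊗[K] B →ₗ[K] B) (g : B →ₗ[K] B ⊗[K] B)
    (f_deg : ∀ (n : ℕ) (x : B ⊗[K] B), x ∈ grade2 K B G (n + 1) → f x ∈ G.grade n)
    (f_deg0 : ∀ x ∈ grade2 K B G 0, f x = 0)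
    (g_deg : ∀ (n : ℕ) (x : B), x ∈ G.grade (n + 1) → g x ∈ grade2 K B G n)
    (g_deg0 : ∀ x ∈ G.grade 0, g x = 0)
    (f_one_left : ∀ b : B, f ((1 : B) ⊗ₜ[K] b) = 0)
    (f_one_right : ∀ b : B, f (b ⊗ₜ[K] (1 : B)) = 0)
    (counit_f : ∀ u : B ⊗[K] B, Coalgebra.counit (R := K) (f u) = 0)
    (g_one : g (1 : B) = 0)
    (counit_g_left : counitL K B ∘ₗ g = 0)
    (counit_g_right : counitR K B ∘ₗ g = 0)
    (cocycle_h : ∀ a b c : B,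
      a * f (b ⊗ₜ[K] c) - f ((a * b) ⊗ₜ[K] c) + f (a ⊗ₜ[K] (b * c))
        - f (a ⊗ₜ[K] b) * c = 0)
    (cocycle_mixed :
      TensorProduct.map f (mulM K B) ∘ₗ comul2 K B
        - Coalgebra.comul ∘ₗ f
        + TensorProduct.map (mulM K B) f ∘ₗ comul2 K B
        + TensorProduct.map (mulM K B) (mulM K B) ∘ₗ ttc K B ∘ₗ
            TensorProduct.map (Coalgebra.comul (R := K) (A := B)) g
        - g ∘ₗ mulM K B
        + TensorProduct.map (mulM K B) (mulM K B) ∘ₗ ttc K B ∘ₗ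
            TensorProduct.map g (Coalgebra.comul (R := K) (A := B)) = 0)
    (cocycle_c : ∀ c : B,
      LinearMap.lTensor B g (Coalgebra.comul c)
        - assocM K B (LinearMap.rTensor B (Coalgebra.comul (R := K) (A := B)) (g c))
        + LinearMap.lTensor B (Coalgebra.comul (R := K) (A := B)) (g c)
        - assocM K B (LinearMap.rTensor B g (Coalgebra.comul c)) = 0) :
    ∃ D : OneDeformation K B G, D.f = f ∧ D.g = g := by
  refine ⟨⟨f, g, f_deg, f_deg0, g_deg, g_deg0, ?_, ?_, ?_, ?_, ?_, ?_, ?_, ?_, ?_⟩, rfl, rfl⟩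
  · intro x y z
    have h2 : f ((x.1 * y.1) ⊗ₜ[K] z.1) =
        x.1 * f (y.1 ⊗ₜ[K] z.1) + f (x.1 ⊗ₜ[K] (y.1 * z.1)) - f (x.1 ⊗ₜ[K] y.1) * z.1 := by
      have h' := neg_eq_zero.mpr (cocycle_h x.1 y.1 z.1)
      rw [← sub_eq_zero, ← h']; abel
    simp only [defMul, Prod.mk.injEq]
    refine ⟨mul_assoc _ _ _, ?_⟩
    simp only [h2, mul_add, add_mul, mul_assoc]
    abel
  · intro x
    simp [defMul, f_one_left]
  · intro x
    simp [defMul, f_one_right]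
  · intro x y
    simp [defMul, counit_f]
  · intro x
    have hc : ∀ a : B, assocM K B (LinearMap.rTensor B (Coalgebra.comul (R := K) (A := B))
        (Coalgebra.comul a)) = LinearMap.lTensor B Coalgebra.comul (Coalgebra.comul a) := by
      intro a
      have := Coalgebra.coassoc_apply (R := K) (A := B) a
      simp only [assocM] at this ⊢; exact this
    have hg : ∀ c : B,
        assocM K B (LinearMap.rTensor B (Coalgebra.comul (R := K) (A := B)) (g c)) +
          assocM K B (LinearMap.rTensor B g (Coalgebra.comul c)) =
        LinearMap.lTensor B g (Coalgebra.comul c) +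
          LinearMap.lTensor B (Coalgebra.comul (R := K) (A := B)) (g c) := by
      intro c
      have h' := neg_eq_zero.mpr (cocycle_c c)
      rw [← sub_eq_zero, ← h']; abel
    simp only [defComul, defComulLeft, defComulRight, map_add, Prod.mk.injEq]
    refine ⟨hc x.1, ?_⟩
    have h' := neg_eq_zero.mpr (cocycle_c x.1)
    rw [hc x.2, ← sub_eq_zero, ← h']
    abel
  · intro x
    have hz : ∀ a : B, counitL K B (g a) = 0 := fun a => LinearMap.congr_fun counit_g_left a
    simp [defComul, counitL_comul, hz]
  · intro x
    have hz : ∀ a : B, counitR K B (g a) = 0 := fun a => LinearMap.congr_fun counit_g_right a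
    simp [defComul, counitR_comul, hz]
  · intro x y
    have key := LinearMap.congr_fun cocycle_mixed (x.1 ⊗ₜ[K] y.1)
    simp only [LinearMap.sub_apply, LinearMap.add_apply, LinearMap.coe_comp,
      Function.comp_apply, LinearMap.zero_apply, comul2, map_tmul, mulM,
      LinearMap.mul'_apply] at key
    rw [mul_ttc, mul_ttc] at key
    have key' := neg_eq_zero.mpr key
    simp only [defComul, defMul, defMul2, Prod.mk.injEq, map_add, LinearMap.mul'_apply,
      Bialgebra.comul_mul, LinearMap.add_apply, LinearMap.coe_comp, Function.comp_apply,
      mulM, mul_add, add_mul]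
    refine ⟨trivial, ?_⟩
    rw [← sub_eq_zero, ← key']
    abel
  · simp [defComul, g_one]


end GBD
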